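/- arXiv:1803.01390 — 2 statements merged into one kernel-verified Lean document; each statement's English description precedes it below -/
import Mathlib

section
/- Every navigational expression built from ∅, id, the diversity relation di, edge labels, composition, union, transitive closure, converse, intersection, and projections is closed under injective homomorphisms: if h is an injective homomorphism from G1 to G2 and (m,n) is in the evaluation on G1, then (h(m),h(n)) is in the evaluation on G2. -/
/-- Navigational expressions over edge labels L: ∅, id, diversity,
labels, composition, union, transitive closure, converse, intersection,
and projections π1, π2. -/
inductive NExpr (L : Type) : Type
  | empty : NExpr L
  | id : NExpr L
  | di : NExpr L
  | label (ℓ : L) : NExpr L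
  | comp (e₁ e₂ : NExpr L) : NExpr L
  | union (e₁ e₂ : NExpr L) : NExpr L
  | tc (e : NExpr L) : NExpr L
  | conv (e : NExpr L) : NExpr L
  | inter (e₁ e₂ : NExpr L) : NExpr L
  | pr1 (e : NExpr L) : NExpr L
  | pr2 (e : NExpr L) : NExpr L

/-- Evaluation of a navigational expression on a graph given by its
label-indexed edge relations; diversity evaluates to inequality. -/
def NExpr.eval {L V : Type} (edges : L → V → V → Prop) : NExpr L → V → V → Prop
  | .empty => fun _ _ => False
  | .id => fun m n => m = n
  | .di => fun m n => m ≠ n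
  | .label ℓ => edges ℓ
  | .comp e₁ e₂ => Relation.Comp (e₁.eval edges) (e₂.eval edges)
  | .union e₁ e₂ => fun m n => e₁.eval edges m n ∨ e₂.eval edges m n
  | .tc e => Relation.TransGen (e.eval edges)
  | .conv e => fun m n => e.eval edges n m
  | .inter e₁ e₂ => fun m n => e₁.eval edges m n ∧ e₂.eval edges m n
  | .pr1 e => fun m n => m = n ∧ ∃ x, e.eval edges m x
  | .pr2 e => fun m n => m = n ∧ ∃ x, e.eval edges x m

/-- Every navigational expression in this language (with diversity) is
closed under injective homomorphisms of labeled graphs. -/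
theorem stmt4 (L V1 V2 : Type) [Fintype V1] [Fintype V2]
    (E1 : L → V1 → V1 → Prop) (E2 : L → V2 → V2 → Prop)
    (h : V1 → V2) (hinj : Function.Injective h)
    (hhom : ∀ ℓ m n, E1 ℓ m n → E2 ℓ (h m) (h n))
    (e : NExpr L) (m n : V1) (hmn : e.eval E1 m n) :
    e.eval E2 (h m) (h n) := by
  induction e generalizing m n with
  | empty => exact hmn
  | id => exact congrArg h hmn
  | di => exact fun he => hmn (hinj he)
  | label ℓ => exact hhom ℓ m n hmn
  | comp e₁ e₂ ih₁ ih₂ =>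
    obtain ⟨x, h1, h2⟩ := hmn
    exact ⟨h x, ih₁ m x h1, ih₂ x n h2⟩
  | union e₁ e₂ ih₁ ih₂ => exact hmn.imp (ih₁ m n) (ih₂ m n)
  | tc e ih =>
    induction hmn with
    | single hx => exact Relation.TransGen.single (ih _ _ hx)
    | tail _ hx ih2 => exact Relation.TransGen.tail ih2 (ih _ _ hx)
  | conv e ih => exact ih n m hmn
  | inter e₁ e₂ ih₁ ih₂ => exact ⟨ih₁ m n hmn.1, ih₂ m n hmn.2⟩
  | pr1 e ih =>
    obtain ⟨rfl, x, hx⟩ := hmn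
    exact ⟨rfl, h x, ih m x hx⟩
  | pr2 e ih =>
    obtain ⟨rfl, x, hx⟩ := hmn
    exact ⟨rfl, h x, ih x m hx⟩
end

section
/- Let e be a navigational expression over unlabeled graphs built from ∅, id, the edge label, composition, union, transitive closure, converse, intersection, and projections. If there is some unlabeled tree on which e evaluates to a nonempty relation, then there exists k ≥ 0 such that for every unlabeled tree T: e evaluates to a nonempty relation on T if and only if E^k evaluates to a nonempty relation on T (where E is the edge relation and E^0 = id), equivalently if and only if depth(T) ≥ k. -/
/-- An unlabeled tree. -/
structure DTree (V : Type) where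
  E : V → V → Prop
  acyclic : ∀ v, ¬ Relation.TransGen E v v
  root : V
  root_no_in : ∀ m, ¬ E m root
  in_unique : ∀ n, n ≠ root → ∃! m, E m n

/-- A chain: a tree in which every node has at most one child. -/
structure DChain (V : Type) extends DTree V where
  at_most_one_child : ∀ m n n', E m n → E m n' → n = n'

/-- k-fold composition of a relation (relPow R 0 = equality). -/
def relPow {V : Type} (R : V → V → Prop) : ℕ → V → V → Prop
  | 0 => fun m n => m = n
  | k + 1 => Relation.Comp R (relPow R k)

/-- Navigational expressions over a single edge relation: ∅, id, the edge
label, composition, union, transitive closure, converse, intersection,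
and projections. -/
inductive UExpr : Type
  | empty : UExpr
  | id : UExpr
  | edge : UExpr
  | comp (e₁ e₂ : UExpr) : UExpr
  | union (e₁ e₂ : UExpr) : UExpr
  | tc (e : UExpr) : UExpr
  | conv (e : UExpr) : UExpr
  | inter (e₁ e₂ : UExpr) : UExpr
  | pr1 (e : UExpr) : UExpr
  | pr2 (e : UExpr) : UExpr

/-- Evaluation of an expression on an unlabeled graph. -/
def UExpr.eval {V : Type} (E : V → V → Prop) : UExpr → V → V → Prop
  | .empty => fun _ _ => False
  | .id => fun m n => m = n
  | .edge => E
  | .comp e₁ e₂ => Relation.Comp (e₁.eval E) (e₂.eval E)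
  | .union e₁ e₂ => fun m n => e₁.eval E m n ∨ e₂.eval E m n
  | .tc e => Relation.TransGen (e.eval E)
  | .conv e => fun m n => e.eval E n m
  | .inter e₁ e₂ => fun m n => e₁.eval E m n ∧ e₂.eval E m n
  | .pr1 e => fun m n => m = n ∧ ∃ x, e.eval E m x
  | .pr2 e => fun m n => m = n ∧ ∃ x, e.eval E x m

/-!
Evaluation of these expressions is preserved by homomorphisms of the underlying graphs. A finite
tree of height `d` and the chain `0 → 1 → ⋯ → d` map homomorphically into each other (by the depth
function, and along a longest root path), so an expression is nonempty on a tree iff it is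
nonempty on the chain of the same height. Nonemptiness on chains is monotone in the height, so
it holds exactly from the least height `k` at which it holds, and `E^k` is nonempty on exactly
the chains, hence exactly the trees, of height at least `k`.
-/

theorem relPow_succ_right {V : Type} (R : V → V → Prop) (k : ℕ) (m n : V) :
    relPow R (k + 1) m n ↔ ∃ x, relPow R k m x ∧ R x n := by
  induction k generalizing m with
  | zero => simp [relPow, Relation.Comp]
  | succ k ih =>
    simp only [relPow, Relation.Comp] at ih ⊢
    simp only [ih]
    aesop

namespace UExpr

theorem eval_map {V W : Type} {E : V → V → Prop} {F : W → W → Prop} (f : V → W)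
    (hf : ∀ a b, E a b → F (f a) (f b)) (e : UExpr) {m n : V} (h : e.eval E m n) :
    e.eval F (f m) (f n) := by
  induction e generalizing m n with
  | empty => exact h.elim
  | id => exact congrArg f h
  | edge => exact hf m n h
  | comp e₁ e₂ ih₁ ih₂ =>
    obtain ⟨x, h₁, h₂⟩ := h
    exact ⟨f x, ih₁ h₁, ih₂ h₂⟩
  | union e₁ e₂ ih₁ ih₂ => exact h.imp ih₁ ih₂
  | tc e ih => exact Relation.TransGen.lift f (fun _ _ hab => ih hab) _ _ h
  | conv e ih => exact ih h
  | inter e₁ e₂ ih₁ ih₂ => exact h.imp ih₁ ih₂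
  | pr1 e ih =>
    obtain ⟨rfl, x, hx⟩ := h
    exact ⟨rfl, f x, ih hx⟩
  | pr2 e ih =>
    obtain ⟨rfl, x, hx⟩ := h
    exact ⟨rfl, f x, ih hx⟩

def pow : ℕ → UExpr
  | 0 => .id
  | k + 1 => .comp .edge (pow k)

theorem eval_pow {V : Type} (E : V → V → Prop) (k : ℕ) : (pow k).eval E = relPow E k := by
  induction k with
  | zero => rfl
  | succ k ih => simp only [pow, eval, relPow, ih]

end UExpr

/-- The chain `0 → 1 → ⋯ → D`, embedded in `ℕ`; the nodes above `D` are isolated. -/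
def chainEdge (D : ℕ) (i j : ℕ) : Prop := j = i + 1 ∧ j ≤ D

theorem chainEdge_mono {D D' : ℕ} (h : D ≤ D') {i j : ℕ} (hij : chainEdge D i j) :
    chainEdge D' i j :=
  ⟨hij.1, hij.2.trans h⟩

theorem exists_eval_chainEdge_mono (e : UExpr) {D D' : ℕ} (h : D ≤ D')
    (he : ∃ m n, e.eval (chainEdge D) m n) : ∃ m n, e.eval (chainEdge D') m n := by
  obtain ⟨m, n, hmn⟩ := he
  exact ⟨m, n, e.eval_map id (fun _ _ => chainEdge_mono h) hmn⟩

theorem relPow_chainEdge_of_le {D : ℕ} (k m : ℕ) (h : m + k ≤ D) :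
    relPow (chainEdge D) k m (m + k) := by
  induction k generalizing m with
  | zero => rfl
  | succ k ih =>
    refine ⟨m + 1, ⟨rfl, by omega⟩, ?_⟩
    simpa only [Nat.add_right_comm, Nat.add_assoc] using ih (m + 1) (by omega)

theorem eq_zero_or_le_of_relPow_chainEdge {D k m n : ℕ} (h : relPow (chainEdge D) k m n) :
    k = 0 ∨ m + k ≤ D := by
  induction k generalizing m with
  | zero => exact .inl rfl
  | succ k ih =>
    obtain ⟨x, ⟨rfl, hx⟩, hxn⟩ := h
    have := ih hxn
    omega

theorem exists_relPow_chainEdge_iff (D k : ℕ) :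
    (∃ m n, relPow (chainEdge D) k m n) ↔ k ≤ D := by
  refine ⟨fun ⟨m, n, h⟩ => ?_, fun h => ⟨0, 0 + k, relPow_chainEdge_of_le k 0 (by omega)⟩⟩
  have := eq_zero_or_le_of_relPow_chainEdge h
  omega

theorem exists_hom_chainEdge_of_relPow {V : Type} (R : V → V → Prop) (k : ℕ) {u v : V}
    (h : relPow R k u v) : ∃ g : ℕ → V, g 0 = u ∧ ∀ i j, chainEdge k i j → R (g i) (g j) := by
  induction k generalizing u with
  | zero => exact ⟨fun _ => u, rfl, fun i j ⟨hj, hjk⟩ => by omega⟩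
  | succ k ih =>
    obtain ⟨w, huw, hwv⟩ := h
    obtain ⟨g, rfl, hg⟩ := ih hwv
    refine ⟨fun | 0 => u | i + 1 => g i, rfl, ?_⟩
    rintro (_ | i) j ⟨rfl, hj⟩
    · exact huw
    · exact hg i (i + 1) ⟨rfl, by omega⟩

namespace DTree

variable {V : Type} (T : DTree V)

theorem wellFounded_E [Finite V] : WellFounded T.E :=
  have : Std.Irrefl (Relation.TransGen T.E) := ⟨T.acyclic⟩
  Subrelation.wf Relation.TransGen.single (Finite.wellFounded_of_trans_of_irrefl _)

theorem exists_relPow_root [Finite V] (v : V) : ∃ d, relPow T.E d T.root v := by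
  induction v using T.wellFounded_E.induction with
  | _ v ih =>
    by_cases hv : v = T.root
    · exact ⟨0, hv.symm⟩
    · obtain ⟨m, hm, -⟩ := T.in_unique v hv
      obtain ⟨d, hd⟩ := ih m hm
      exact ⟨d + 1, (relPow_succ_right _ _ _ _).mpr ⟨m, hd, hm⟩⟩

theorem relPow_root_unique {a b : ℕ} {v : V} (ha : relPow T.E a T.root v)
    (hb : relPow T.E b T.root v) : a = b := by
  induction a generalizing b v with
  | zero =>
    obtain rfl : T.root = v := ha
    rcases b with _ | b
    · rfl
    · obtain ⟨x, -, hx⟩ := (relPow_succ_right _ _ _ _).mp hb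
      exact (T.root_no_in x hx).elim
  | succ a ih =>
    obtain ⟨x, hx, hxv⟩ := (relPow_succ_right _ _ _ _).mp ha
    rcases b with _ | b
    · obtain rfl : T.root = v := hb
      exact (T.root_no_in x hxv).elim
    · obtain ⟨y, hy, hyv⟩ := (relPow_succ_right _ _ _ _).mp hb
      obtain ⟨p, -, hp⟩ := T.in_unique v fun hv => T.root_no_in x (hv ▸ hxv)
      obtain rfl : x = y := (hp x hxv).trans (hp y hyv).symm
      rw [ih hx hy]

noncomputable def depth [Finite V] (v : V) : ℕ := (T.exists_relPow_root v).choose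

theorem relPow_depth [Finite V] (v : V) : relPow T.E (T.depth v) T.root v :=
  (T.exists_relPow_root v).choose_spec

theorem depth_eq_succ_of_E [Finite V] {a b : V} (h : T.E a b) : T.depth b = T.depth a + 1 :=
  T.relPow_root_unique (T.relPow_depth b)
    ((relPow_succ_right _ _ _ _).mpr ⟨a, T.relPow_depth a, h⟩)

/-- The paper's `depth(T)`. -/
noncomputable def height [Fintype V] : ℕ := Finset.univ.sup T.depth

theorem depth_le_height [Fintype V] (v : V) : T.depth v ≤ T.height :=
  Finset.le_sup (Finset.mem_univ v)

theorem exists_depth_eq_height [Fintype V] : ∃ v, T.depth v = T.height := by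
  obtain ⟨v, -, hv⟩ := Finset.exists_mem_eq_sup Finset.univ ⟨T.root, Finset.mem_univ _⟩ T.depth
  exact ⟨v, hv.symm⟩

theorem exists_eval_iff_chainEdge_height [Fintype V] (e : UExpr) :
    (∃ m n, e.eval T.E m n) ↔ ∃ m n, e.eval (chainEdge T.height) m n := by
  constructor
  · rintro ⟨m, n, h⟩
    have hom (a b : V) (hab : T.E a b) : chainEdge T.height (T.depth a) (T.depth b) :=
      ⟨T.depth_eq_succ_of_E hab, T.depth_le_height b⟩
    exact ⟨_, _, e.eval_map T.depth hom h⟩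
  · rintro ⟨m, n, h⟩
    obtain ⟨v, hv⟩ := T.exists_depth_eq_height
    obtain ⟨g, -, hom⟩ := exists_hom_chainEdge_of_relPow T.E _ (hv ▸ T.relPow_depth v)
    exact ⟨_, _, e.eval_map g hom h⟩

end DTree

/-- If an expression of this language evaluates nonempty on some
unlabeled tree, then there is a k ≥ 0 such that on every unlabeled tree T
the expression evaluates nonempty iff E^k evaluates nonempty on T
(i.e. iff depth(T) ≥ k). -/
theorem stmt7 (e : UExpr)
    (hne : ∃ (V : Type) (_ : Fintype V) (T : DTree V) (m n : V),
      e.eval T.E m n) :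
    ∃ k : ℕ, ∀ (V : Type), Fintype V → ∀ T : DTree V,
      ((∃ m n : V, e.eval T.E m n) ↔ (∃ m n : V, relPow T.E k m n)) := by
  classical
  obtain ⟨V₀, _, T₀, m₀, n₀, h₀⟩ := hne
  have hchain : ∃ D m n, e.eval (chainEdge D) m n :=
    ⟨T₀.height, (T₀.exists_eval_iff_chainEdge_height e).mp ⟨m₀, n₀, h₀⟩⟩
  refine ⟨Nat.find hchain, fun V _ T => ?_⟩
  rw [T.exists_eval_iff_chainEdge_height e, ← UExpr.eval_pow,
    T.exists_eval_iff_chainEdge_height, UExpr.eval_pow, exists_relPow_chainEdge_iff]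
  exact ⟨Nat.find_min' hchain, fun hk => exists_eval_chainEdge_mono e hk (Nat.find_spec hchain)⟩
end
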